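/- The operator norm of the indefinite integration operator R on L^2(-1,1), (Rφ)(x) = ∫_{-1}^x φ(s) ds, equals 4/π. -/

import Mathlib

/-!
Schur test with the weight `w(s) = cos (π (s + 1) / 4)`, which is also the extremal function.
One has `∫_{-1}^x w = (4/π) v(x)` and `∫_s^1 v = (4/π) w(s)` for `v(x) = sin (π (x + 1) / 4)`.
Weighted Cauchy–Schwarz gives `|Rφ(x)|² ≤ (4/π) v(x) ∫_{-1}^x φ²/w`; integrating in `x` and
exchanging the order of integration turns the right-hand side into `(4/π)² ‖φ‖²`.
Equality holds for `φ = w`, since `Rw = (4/π) v` and `‖w‖ = ‖v‖ = 1`.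
-/

open MeasureTheory Set Real
open scoped ENNReal

theorem ENNReal.lintegral_sq_le_lintegral_mul_lintegral_sq_div {α : Type*} [MeasurableSpace α]
    {μ : Measure α} {f w : α → ℝ≥0∞} (hf : AEMeasurable f μ) (hw : AEMeasurable w μ)
    (hw0 : ∀ᵐ a ∂μ, w a ≠ 0) (hwtop : ∀ᵐ a ∂μ, w a ≠ ∞) :
    (∫⁻ a, f a ∂μ) ^ 2 ≤ (∫⁻ a, w a ∂μ) * ∫⁻ a, f a ^ 2 / w a ∂μ := by
  set r : α → ℝ≥0∞ := fun a => w a ^ (2⁻¹ : ℝ)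
  have hr : AEMeasurable r μ := hw.pow_const _
  have hr_sq (a : α) : r a ^ (2 : ℝ) = w a := by
    simp only [r, ← ENNReal.rpow_mul]; norm_num
  have hsplit : f =ᵐ[μ] fun a => r a * (f a / r a) := by
    filter_upwards [hw0, hwtop] with a h0 htop
    refine (ENNReal.mul_div_cancel ?_ ?_).symm
    · simpa [r] using h0
    · simpa [r] using htop
  have hquot_sq (a : α) : (f a / r a) ^ (2 : ℝ) = f a ^ 2 / w a := by
    rw [div_eq_mul_inv, ENNReal.mul_rpow_of_nonneg _ _ (by norm_num), ENNReal.inv_rpow, hr_sq,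
      ENNReal.rpow_two, div_eq_mul_inv]
  have holder := ENNReal.lintegral_mul_le_Lp_mul_Lq μ Real.HolderConjugate.two_two hr
    (hf.div hr)
  simp only [Pi.mul_apply, Pi.div_apply, hr_sq, hquot_sq] at holder
  calc (∫⁻ a, f a ∂μ) ^ 2 = (∫⁻ a, r a * (f a / r a) ∂μ) ^ (2 : ℝ) := by
        rw [lintegral_congr_ae hsplit, ENNReal.rpow_two]
    _ ≤ ((∫⁻ a, w a ∂μ) ^ (1 / 2 : ℝ) * (∫⁻ a, f a ^ 2 / w a ∂μ) ^ (1 / 2 : ℝ)) ^ (2 : ℝ) :=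
        ENNReal.rpow_le_rpow holder (by norm_num)
    _ = (∫⁻ a, w a ∂μ) * ∫⁻ a, f a ^ 2 / w a ∂μ := by
        rw [ENNReal.mul_rpow_of_nonneg _ _ (by norm_num), ← ENNReal.rpow_mul, ← ENNReal.rpow_mul]
        norm_num

namespace MeasureTheory

theorem lintegral_mul_setLIntegral_Iic_eq {μ : Measure ℝ} [SFinite μ] {f g : ℝ → ℝ≥0∞}
    (hf : AEMeasurable f μ) (hg : AEMeasurable g μ) :
    ∫⁻ x, g x * ∫⁻ s in Iic x, f s ∂μ ∂μ = ∫⁻ s, f s * ∫⁻ x in Ici s, g x ∂μ ∂μ := by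
  have hK : AEMeasurable (Function.uncurry fun x s => g x * (Iic x).indicator f s) (μ.prod μ) :=
    (hg.comp_quasiMeasurePreserving Measure.quasiMeasurePreserving_fst).mul
      ((hf.comp_quasiMeasurePreserving Measure.quasiMeasurePreserving_snd).indicator
        (measurableSet_le measurable_snd measurable_fst))
  have hswap (x s : ℝ) : g x * (Iic x).indicator f s = f s * (Ici s).indicator g x := by
    by_cases h : s ≤ x <;> simp [h, mul_comm]
  calc ∫⁻ x, g x * ∫⁻ s in Iic x, f s ∂μ ∂μ
      = ∫⁻ x, ∫⁻ s, g x * (Iic x).indicator f s ∂μ ∂μ := by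
        simp only [lintegral_const_mul'' _ (hf.indicator measurableSet_Iic),
          lintegral_indicator measurableSet_Iic]
    _ = ∫⁻ s, ∫⁻ x, g x * (Iic x).indicator f s ∂μ ∂μ := lintegral_lintegral_swap hK
    _ = ∫⁻ s, f s * ∫⁻ x in Ici s, g x ∂μ ∂μ := by
        simp only [hswap, lintegral_const_mul'' _ (hg.indicator measurableSet_Ici),
          lintegral_indicator measurableSet_Ici]

theorem lintegral_sq_setLIntegral_Iic_le {μ : Measure ℝ} [SFinite μ] {f w v : ℝ → ℝ≥0∞}
    {C : ℝ≥0∞} (hf : AEMeasurable f μ) (hw : AEMeasurable w μ) (hv : AEMeasurable v μ)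
    (hw0 : ∀ᵐ s ∂μ, w s ≠ 0) (hwtop : ∀ᵐ s ∂μ, w s ≠ ∞)
    (hwv : ∀ᵐ x ∂μ, ∫⁻ s in Iic x, w s ∂μ ≤ C * v x)
    (hvw : ∀ᵐ s ∂μ, ∫⁻ x in Ici s, v x ∂μ ≤ C * w s) :
    ∫⁻ x, (∫⁻ s in Iic x, f s ∂μ) ^ 2 ∂μ ≤ C ^ 2 * ∫⁻ s, f s ^ 2 ∂μ := by
  calc ∫⁻ x, (∫⁻ s in Iic x, f s ∂μ) ^ 2 ∂μ
      ≤ ∫⁻ x, C * v x * ∫⁻ s in Iic x, f s ^ 2 / w s ∂μ ∂μ := by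
        refine lintegral_mono_ae ?_
        filter_upwards [hwv] with x hx
        exact (ENNReal.lintegral_sq_le_lintegral_mul_lintegral_sq_div hf.restrict hw.restrict
          (ae_restrict_of_ae hw0) (ae_restrict_of_ae hwtop)).trans (by gcongr)
    _ = ∫⁻ s, f s ^ 2 / w s * ∫⁻ x in Ici s, C * v x ∂μ ∂μ :=
        lintegral_mul_setLIntegral_Iic_eq ((hf.pow_const 2).div hw) (hv.const_mul C)
    _ ≤ ∫⁻ s, C ^ 2 * f s ^ 2 ∂μ := by
        refine lintegral_mono_ae ?_
        filter_upwards [hvw, hw0, hwtop] with s hs h0 htop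
        calc f s ^ 2 / w s * ∫⁻ x in Ici s, C * v x ∂μ
            = C * (f s ^ 2 / w s * ∫⁻ x in Ici s, v x ∂μ) := by
              rw [lintegral_const_mul'' _ hv.restrict]; ring
          _ ≤ C * (f s ^ 2 / w s * (C * w s)) := by gcongr
          _ = C ^ 2 * f s ^ 2 := by
              rw [mul_left_comm _ C, ENNReal.div_mul_cancel h0 htop]; ring
    _ = C ^ 2 * ∫⁻ s, f s ^ 2 ∂μ := lintegral_const_mul'' _ (hf.pow_const 2)

theorem Measure.restrict_Ioo_restrict_Iic {ν : Measure ℝ} [NullSingletonClass ν] {a b x : ℝ}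
    (hx : x < b) : (ν.restrict (Ioo a b)).restrict (Iic x) = ν.restrict (Ioo a x) := by
  rw [Measure.restrict_restrict measurableSet_Iic, Measure.restrict_congr_set Ioo_ae_eq_Ioc]
  congr 1
  ext y
  simp only [mem_inter_iff, mem_Iic, mem_Ioo, mem_Ioc]
  constructor
  · rintro ⟨hyx, hay, -⟩; exact ⟨hay, hyx⟩
  · rintro ⟨hay, hyx⟩; exact ⟨hyx, hay, hyx.trans_lt hx⟩

theorem Measure.restrict_Ioo_restrict_Ici {ν : Measure ℝ} [NullSingletonClass ν] {a b s : ℝ}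
    (hs : a < s) : (ν.restrict (Ioo a b)).restrict (Ici s) = ν.restrict (Ioo s b) := by
  rw [Measure.restrict_restrict measurableSet_Ici, Measure.restrict_congr_set Ioo_ae_eq_Ico]
  congr 1
  ext y
  simp only [mem_inter_iff, mem_Ici, mem_Ioo, mem_Ico]
  constructor
  · rintro ⟨hsy, -, hyb⟩; exact ⟨hsy, hyb⟩
  · rintro ⟨hsy, hyb⟩; exact ⟨hsy, hs.trans_le hsy, hyb⟩

theorem setLIntegral_Ioo_ofReal_eq {a b : ℝ} {f : ℝ → ℝ} (hab : a ≤ b)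
    (hf : IntegrableOn f (Ioo a b)) (hf_nonneg : ∀ x ∈ Ioo a b, 0 ≤ f x) :
    ∫⁻ x in Ioo a b, ENNReal.ofReal (f x) = ENNReal.ofReal (∫ x in a..b, f x) := by
  rw [intervalIntegral.integral_of_le hab, integral_Ioc_eq_integral_Ioo,
    ofReal_integral_eq_lintegral_ofReal hf (ae_restrict_of_forall_mem measurableSet_Ioo hf_nonneg)]

theorem eLpNorm_two_le_mul_of_lintegral_sq_le {α E F : Type*} [MeasurableSpace α]
    {μ : Measure α} [NormedAddCommGroup E] [NormedAddCommGroup F] {f : α → E} {g : α → F}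
    {C : ℝ≥0∞} (h : ∫⁻ a, ‖f a‖ₑ ^ 2 ∂μ ≤ C ^ 2 * ∫⁻ a, ‖g a‖ₑ ^ 2 ∂μ) :
    eLpNorm f 2 μ ≤ C * eLpNorm g 2 μ := by
  simp only [eLpNorm_eq_lintegral_rpow_enorm_toReal two_ne_zero ENNReal.ofNat_ne_top,
    ENNReal.toReal_ofNat, ENNReal.rpow_two]
  calc (∫⁻ a, ‖f a‖ₑ ^ 2 ∂μ) ^ (1 / 2 : ℝ) ≤ (C ^ 2 * ∫⁻ a, ‖g a‖ₑ ^ 2 ∂μ) ^ (1 / 2 : ℝ) :=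
        ENNReal.rpow_le_rpow h (by norm_num)
    _ = C * (∫⁻ a, ‖g a‖ₑ ^ 2 ∂μ) ^ (1 / 2 : ℝ) := by
        rw [ENNReal.mul_rpow_of_nonneg _ _ (by norm_num), ← ENNReal.rpow_two, ← ENNReal.rpow_mul]
        norm_num

theorem eLpNorm_two_restrict_Ioo_eq {a b : ℝ} (hab : a ≤ b) {f : ℝ → ℝ}
    (hf : MemLp f 2 (volume.restrict (Ioo a b))) :
    eLpNorm f 2 (volume.restrict (Ioo a b)) = ENNReal.ofReal √(∫ x in a..b, f x ^ 2) := by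
  rw [hf.eLpNorm_eq_integral_rpow_norm two_ne_zero ENNReal.ofNat_ne_top, sqrt_eq_rpow,
    intervalIntegral.integral_of_le hab, integral_Ioc_eq_integral_Ioo]
  simp

theorem eLpNorm_intervalIntegral_le_of_schur {a b C : ℝ} {φ w v : ℝ → ℝ}
    (hφ : AEStronglyMeasurable φ (volume.restrict (Ioo a b)))
    (hw : IntegrableOn w (Ioo a b)) (hv : IntegrableOn v (Ioo a b))
    (hw_pos : ∀ s ∈ Ioo a b, 0 < w s) (hv_nonneg : ∀ x ∈ Ioo a b, 0 ≤ v x)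
    (hwv : ∀ x ∈ Ioo a b, ∫ s in a..x, w s ≤ C * v x)
    (hvw : ∀ s ∈ Ioo a b, ∫ x in s..b, v x ≤ C * w s) :
    eLpNorm (fun x => ∫ s in a..x, φ s) 2 (volume.restrict (Ioo a b)) ≤
      ENNReal.ofReal C * eLpNorm φ 2 (volume.restrict (Ioo a b)) := by
  refine eLpNorm_two_le_mul_of_lintegral_sq_le ((lintegral_mono_ae ?_).trans
    (lintegral_sq_setLIntegral_Iic_le (w := fun s => ENNReal.ofReal (w s))
      (v := fun x => ENNReal.ofReal (v x)) hφ.enorm hw.1.aemeasurable.ennreal_ofReal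
      hv.1.aemeasurable.ennreal_ofReal ?_ (ae_of_all _ fun _ => ENNReal.ofReal_ne_top) ?_ ?_))
  · filter_upwards [ae_restrict_mem measurableSet_Ioo] with x hx
    rw [Measure.restrict_Ioo_restrict_Iic hx.2, intervalIntegral.integral_of_le hx.1.le,
      ← Measure.restrict_congr_set Ioo_ae_eq_Ioc]
    gcongr
    exact enorm_integral_le_lintegral_enorm _
  · filter_upwards [ae_restrict_mem measurableSet_Ioo] with s hs
    exact (ENNReal.ofReal_pos.2 (hw_pos s hs)).ne'
  · filter_upwards [ae_restrict_mem measurableSet_Ioo] with x hx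
    rw [Measure.restrict_Ioo_restrict_Iic hx.2, setLIntegral_Ioo_ofReal_eq hx.1.le
      (hw.mono_set (Ioo_subset_Ioo_right hx.2.le))
      (fun s hs => (hw_pos s ⟨hs.1, hs.2.trans hx.2⟩).le), ← ENNReal.ofReal_mul' (hv_nonneg x hx)]
    exact ENNReal.ofReal_le_ofReal (hwv x hx)
  · filter_upwards [ae_restrict_mem measurableSet_Ioo] with s hs
    rw [Measure.restrict_Ioo_restrict_Ici hs.1, setLIntegral_Ioo_ofReal_eq hs.2.le
      (hv.mono_set (Ioo_subset_Ioo_left hs.1.le))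
      (fun x hx => hv_nonneg x ⟨hs.1.trans hx.1, hx.2⟩), ← ENNReal.ofReal_mul' (hw_pos s hs).le]
    exact ENNReal.ofReal_le_ofReal (hvw s hs)

end MeasureTheory

theorem integral_cos_pi_div_four (x : ℝ) :
    ∫ s in (-1)..x, cos (π / 4 * s + π / 4) = 4 / π * sin (π / 4 * x + π / 4) := by
  rw [intervalIntegral.integral_comp_mul_add cos (by positivity), integral_cos, smul_eq_mul,
    show π / 4 * -1 + π / 4 = 0 by ring, sin_zero]
  field_simp
  ring

theorem integral_sin_pi_div_four (s : ℝ) :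
    ∫ x in s..1, sin (π / 4 * x + π / 4) = 4 / π * cos (π / 4 * s + π / 4) := by
  rw [intervalIntegral.integral_comp_mul_add sin (by positivity), integral_sin, smul_eq_mul,
    show π / 4 * 1 + π / 4 = π / 2 by ring, cos_pi_div_two]
  field_simp
  ring

theorem integral_cos_pi_div_four_sq : ∫ x in (-1)..1, cos (π / 4 * x + π / 4) ^ 2 = 1 := by
  rw [intervalIntegral.integral_comp_mul_add (fun y => cos y ^ 2) (by positivity),
    show π / 4 * 1 + π / 4 = π / 2 by ring, show π / 4 * -1 + π / 4 = 0 by ring, integral_cos_sq,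
    cos_pi_div_two, sin_zero, smul_eq_mul]
  field_simp
  ring

theorem integral_sin_pi_div_four_sq : ∫ x in (-1)..1, sin (π / 4 * x + π / 4) ^ 2 = 1 := by
  rw [intervalIntegral.integral_comp_mul_add (fun y => sin y ^ 2) (by positivity),
    show π / 4 * 1 + π / 4 = π / 2 by ring, show π / 4 * -1 + π / 4 = 0 by ring, integral_sin_sq,
    cos_pi_div_two, sin_zero, smul_eq_mul]
  field_simp
  ring

theorem memLp_cos_mul_add (a b : ℝ) (p : ℝ≥0∞) (μ : Measure ℝ) [IsFiniteMeasure μ] :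
    MemLp (fun x => cos (a * x + b)) p μ :=
  .of_bound (by fun_prop : Continuous _).aestronglyMeasurable 1
    (ae_of_all _ fun _ => by simpa using abs_cos_le_one _)

theorem memLp_sin_mul_add (a b : ℝ) (p : ℝ≥0∞) (μ : Measure ℝ) [IsFiniteMeasure μ] :
    MemLp (fun x => sin (a * x + b)) p μ :=
  .of_bound (by fun_prop : Continuous _).aestronglyMeasurable 1
    (ae_of_all _ fun _ => by simpa using abs_sin_le_one _)

theorem eLpNorm_cos_pi_div_four :
    eLpNorm (fun x => cos (π / 4 * x + π / 4)) 2 (volume.restrict (Ioo (-1 : ℝ) 1)) = 1 := by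
  rw [eLpNorm_two_restrict_Ioo_eq (by norm_num) (memLp_cos_mul_add _ _ _ _),
    integral_cos_pi_div_four_sq]
  simp

theorem eLpNorm_integral_cos_pi_div_four :
    eLpNorm (fun x => ∫ s in (-1 : ℝ)..x, cos (π / 4 * s + π / 4)) 2
      (volume.restrict (Ioo (-1 : ℝ) 1)) = ENNReal.ofReal (4 / π) := by
  rw [funext integral_cos_pi_div_four,
    eLpNorm_two_restrict_Ioo_eq (by norm_num) ((memLp_sin_mul_add _ _ _ _).const_mul _)]
  simp only [mul_pow, intervalIntegral.integral_const_mul, integral_sin_pi_div_four_sq, mul_one]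
  rw [sqrt_sq (by positivity)]

theorem eLpNorm_intervalIntegral_le_four_div_pi {φ : ℝ → ℝ}
    (hφ : AEStronglyMeasurable φ (volume.restrict (Ioo (-1 : ℝ) 1))) :
    eLpNorm (fun x => ∫ s in (-1 : ℝ)..x, φ s) 2 (volume.restrict (Ioo (-1 : ℝ) 1)) ≤
      ENNReal.ofReal (4 / π) * eLpNorm φ 2 (volume.restrict (Ioo (-1 : ℝ) 1)) := by
  refine eLpNorm_intervalIntegral_le_of_schur hφ
    ((continuous_cos.comp (by fun_prop)).integrableOn_Icc.mono_set Ioo_subset_Icc_self)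
    ((continuous_sin.comp (by fun_prop)).integrableOn_Icc.mono_set Ioo_subset_Icc_self)
    (fun s hs => ?_) (fun x hx => ?_) (fun x _ => (integral_cos_pi_div_four x).le)
    (fun s _ => (integral_sin_pi_div_four s).le)
  · exact cos_pos_of_mem_Ioo ⟨by nlinarith [pi_pos, hs.1], by nlinarith [pi_pos, hs.2]⟩
  · exact sin_nonneg_of_nonneg_of_le_pi (by nlinarith [pi_pos, hx.1]) (by nlinarith [pi_pos, hx.2])

/-- The operator norm of the indefinite integration operator
`(Rφ)(x) = ∫_{-1}^x φ(s) ds` on `L²(-1,1)`, i.e. the supremum of `‖Rφ‖` over all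
`φ ∈ L²(-1,1)` with `‖φ‖ = 1`, equals `4/π`. -/
theorem opNorm_indefinite_integration_eq :
    sSup {c : ℝ | ∃ φ : ℝ → ℝ,
        MeasureTheory.MemLp φ 2 (volume.restrict (Ioo (-1 : ℝ) 1)) ∧
        (eLpNorm φ 2 (volume.restrict (Ioo (-1 : ℝ) 1))).toReal = 1 ∧
        c = (eLpNorm (fun x => ∫ s in (-1 : ℝ)..x, φ s) 2
              (volume.restrict (Ioo (-1 : ℝ) 1))).toReal}
      = 4 / Real.pi := by
  refine IsGreatest.csSup_eq ⟨⟨_, memLp_cos_mul_add (π / 4) (π / 4) _ _, ?_, ?_⟩, ?_⟩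
  · rw [eLpNorm_cos_pi_div_four, ENNReal.toReal_one]
  · rw [eLpNorm_integral_cos_pi_div_four, ENNReal.toReal_ofReal (by positivity)]
  · rintro c ⟨φ, hφ, hφ_norm, rfl⟩
    have hφ_one : eLpNorm φ 2 (volume.restrict (Ioo (-1 : ℝ) 1)) = 1 :=
      (ENNReal.toReal_eq_one_iff _).1 hφ_norm
    refine ENNReal.toReal_le_of_le_ofReal (by positivity) ?_
    simpa [hφ_one] using eLpNorm_intervalIntegral_le_four_div_pi hφ.1
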